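/- arXiv:2405.00131 — 4 statements merged into one kernel-verified Lean document; each statement's English description precedes it below -/
import Mathlib

section
/- The absolute value metric on ℝ is of negative type: for any real numbers x_1,...,x_n and any reals b_1,...,b_n with Σ_i b_i = 0, we have Σ_{i<j} b_i b_j |x_i − x_j| ≤ 0. -/
open Finset

private lemma tele (y : ℕ → ℝ) {a b : ℕ} (h : a ≤ b) :
    ∑ k ∈ Finset.Ico a b, (y (k + 1) - y k) = y b - y a := by
  induction b, h using Nat.le_induction with
  | base => simp
  | succ b hb ih =>
    rw [Finset.sum_Ico_succ_top hb, ih]; ring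

private lemma aux (n : ℕ) (y c : ℕ → ℝ)
    (hmono : ∀ i j, i ≤ j → j < n → y i ≤ y j)
    (hc : ∑ k ∈ Finset.range n, c k = 0) :
    ∑ i ∈ Finset.range n, ∑ j ∈ Finset.range n, c i * c j * |y i - y j| ≤ 0 := by
  set E : ℕ → ℕ → ℝ := fun k i => if i ≤ k then 1 else 0 with hE
  have main : ∀ i j, i ≤ j → j < n →
      |y i - y j| = ∑ k ∈ Finset.range (n - 1), (y (k + 1) - y k) * (E k i - E k j) ^ 2 := by
    intro i j hij hj
    have h1 : |y i - y j| = y j - y i := by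
      rw [abs_sub_comm, abs_of_nonneg (by linarith [hmono i j hij hj])]
    have h2 : ∀ k, (y (k + 1) - y k) * (E k i - E k j) ^ 2
        = if k ∈ Finset.Ico i j then y (k + 1) - y k else 0 := by
      intro k
      by_cases h1 : i ≤ k
      · by_cases h2 : k < j
        · simp [hE, Finset.mem_Ico, h1, h2, Nat.not_le.mpr h2]
        · have hjk : j ≤ k := Nat.not_lt.mp h2
          simp [hE, Finset.mem_Ico, h1, h2, hjk]
      · have hjk : ¬ j ≤ k := fun h => h1 (hij.trans h)
        simp [hE, Finset.mem_Ico, h1, hjk]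
    rw [h1, ← tele y hij]
    simp_rw [h2]
    rw [Finset.sum_ite_mem]
    congr 1
    symm
    rw [Finset.inter_eq_right]
    intro k hk
    rw [Finset.mem_Ico] at hk
    rw [Finset.mem_range]
    omega
  have key : ∀ i ∈ Finset.range n, ∀ j ∈ Finset.range n,
      |y i - y j| = ∑ k ∈ Finset.range (n - 1), (y (k + 1) - y k) * (E k i - E k j) ^ 2 := by
    intro i hi j hj
    rcases le_total i j with h | h
    · exact main i j h (Finset.mem_range.mp hj)
    · rw [abs_sub_comm, main j i h (Finset.mem_range.mp hi)]
      apply Finset.sum_congr rfl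
      intro k _
      ring
  have step1 : ∑ i ∈ Finset.range n, ∑ j ∈ Finset.range n, c i * c j * |y i - y j|
      = ∑ k ∈ Finset.range (n - 1), ∑ i ∈ Finset.range n, ∑ j ∈ Finset.range n,
          c i * c j * ((y (k + 1) - y k) * (E k i - E k j) ^ 2) := by
    have : ∑ i ∈ Finset.range n, ∑ j ∈ Finset.range n, c i * c j * |y i - y j|
        = ∑ i ∈ Finset.range n, ∑ k ∈ Finset.range (n - 1), ∑ j ∈ Finset.range n,
            c i * c j * ((y (k + 1) - y k) * (E k i - E k j) ^ 2) := by
      apply Finset.sum_congr rfl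
      intro i hi
      rw [Finset.sum_comm]
      apply Finset.sum_congr rfl
      intro j hj
      rw [key i hi j hj, Finset.mul_sum]
    rw [this, Finset.sum_comm]
  have inner : ∀ k, ∑ i ∈ Finset.range n, ∑ j ∈ Finset.range n,
      c i * c j * ((y (k + 1) - y k) * (E k i - E k j) ^ 2)
      = (y (k + 1) - y k) * (-2 * (∑ i ∈ Finset.range n, c i * E k i) ^ 2) := by
    intro k
    have expand : ∀ i j : ℕ, c i * c j * ((y (k + 1) - y k) * (E k i - E k j) ^ 2)
        = (y (k + 1) - y k) * ((c i * (E k i) ^ 2) * c j)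
          + (y (k + 1) - y k) * (c i * (c j * (E k j) ^ 2))
          - 2 * (y (k + 1) - y k) * ((c i * E k i) * (c j * E k j)) := by
      intro i j; ring
    simp_rw [expand, Finset.sum_sub_distrib, Finset.sum_add_distrib, ← Finset.mul_sum,
      ← Finset.sum_mul, hc]
    ring
  rw [step1]
  apply Finset.sum_nonpos
  intro k hk
  rw [inner k]
  have hkn : k + 1 < n := by
    rw [Finset.mem_range] at hk; omega
  have hD : 0 ≤ y (k + 1) - y k := by
    linarith [hmono k (k + 1) (Nat.le_succ k) hkn]
  nlinarith [sq_nonneg (∑ i ∈ Finset.range n, c i * E k i)]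

/-- the absolute value metric on ℝ is of negative type. -/
theorem abs_negative_type (n : ℕ) (x : Fin n → ℝ) (b : Fin n → ℝ)
    (hb : ∑ i, b i = 0) :
    (∑ i : Fin n, ∑ j : Fin n, if i < j then b i * b j * |x i - x j| else 0) ≤ 0 := by
  set σ := Tuple.sort x with hσ
  set y : ℕ → ℝ := fun k => if h : k < n then x (σ ⟨k, h⟩) else 0 with hy
  set c : ℕ → ℝ := fun k => if h : k < n then b (σ ⟨k, h⟩) else 0 with hc'
  have hmono : ∀ i j, i ≤ j → j < n → y i ≤ y j := by
    intro i j hij hj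
    have hi : i < n := lt_of_le_of_lt hij hj
    simp only [hy, dif_pos hi, dif_pos hj]
    exact Tuple.monotone_sort x (show (⟨i, hi⟩ : Fin n) ≤ ⟨j, hj⟩ from hij)
  have hc : ∑ k ∈ Finset.range n, c k = 0 := by
    rw [← Fin.sum_univ_eq_sum_range]
    have : ∀ i : Fin n, c (i : ℕ) = b (σ i) := by
      intro i; simp [hc', i.is_lt]
    simp_rw [this]
    rw [Equiv.sum_comp σ b]
    exact hb
  have haux := aux n y c hmono hc
  have hT : ∑ i : Fin n, ∑ j : Fin n, b i * b j * |x i - x j| ≤ 0 := by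
    have e1 : ∑ i : Fin n, ∑ j : Fin n, b i * b j * |x i - x j|
        = ∑ i : Fin n, ∑ j : Fin n, b (σ i) * b (σ j) * |x (σ i) - x (σ j)| := by
      rw [← Equiv.sum_comp σ (fun i => ∑ j, b i * b j * |x i - x j|)]
      apply Finset.sum_congr rfl
      intro i _
      rw [← Equiv.sum_comp σ (fun j => b (σ i) * b j * |x (σ i) - x j|)]
    have e2 : ∑ i : Fin n, ∑ j : Fin n, b (σ i) * b (σ j) * |x (σ i) - x (σ j)|
        = ∑ i ∈ Finset.range n, ∑ j ∈ Finset.range n, c i * c j * |y i - y j| := by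
      rw [← Fin.sum_univ_eq_sum_range]
      apply Finset.sum_congr rfl
      intro i _
      rw [← Fin.sum_univ_eq_sum_range]
      apply Finset.sum_congr rfl
      intro j _
      simp [hy, hc', i.is_lt, j.is_lt]
    rw [e1, e2]
    exact haux
  have split : ∀ i j : Fin n, b i * b j * |x i - x j|
      = (if i < j then b i * b j * |x i - x j| else 0)
        + (if j < i then b j * b i * |x j - x i| else 0) := by
    intro i j
    rcases lt_trichotomy i j with h | h | h
    · rw [if_pos h, if_neg (asymm h), add_zero]
    · subst h; simp
    · rw [if_neg (asymm h), if_pos h, zero_add, abs_sub_comm]; ring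
  have h2 : ∑ i : Fin n, ∑ j : Fin n, b i * b j * |x i - x j|
      = 2 * ∑ i : Fin n, ∑ j : Fin n, (if i < j then b i * b j * |x i - x j| else 0) := by
    have e3 : ∑ i : Fin n, ∑ j : Fin n, b i * b j * |x i - x j|
        = (∑ i : Fin n, ∑ j : Fin n, (if i < j then b i * b j * |x i - x j| else 0))
          + ∑ i : Fin n, ∑ j : Fin n, (if j < i then b j * b i * |x j - x i| else 0) := by
      rw [← Finset.sum_add_distrib]
      apply Finset.sum_congr rfl
      intro i _
      rw [← Finset.sum_add_distrib]
      apply Finset.sum_congr rfl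
      intro j _
      exact split i j
    rw [e3, Finset.sum_comm (f := fun i j => if j < i then b j * b i * |x j - x i| else 0)]
    ring
  linarith [hT]
end

section
/- Let G = (V, E) be a simple graph on vertex set V = [n], and for each vertex i define a string S_i of length r = C(n,2) indexed by unordered pairs e ∈ 𝓔 (all unordered pairs of distinct vertices) over alphabet [n] ∪ {0} by: S_i(e) = 0 if i ∈ e and e ∉ E, and S_i(e) = i otherwise. Then for any distinct vertices i, j, d_H(S_i, S_j) = r if and only if {i, j} ∈ E. -/
attribute [local instance] Classical.propDecidable

/-- The string `S_i : 𝓔 → [n] ∪ {0}` of the clique reduction (`none` plays the role of `0`). -/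
noncomputable def cliqueStr (n : ℕ) (G : SimpleGraph (Fin n)) (i : Fin n) :
    {e : Sym2 (Fin n) // ¬ e.IsDiag} → Option (Fin n) :=
  fun e => if i ∈ e.val ∧ e.val ∉ G.edgeSet then none else some i

/-- the index set has size `C(n,2)` and for distinct vertices `i, j`,
`d_H(S_i, S_j) = C(n,2)` iff `{i,j}` is an edge of `G`. -/
theorem cliqueStr_dist_iff_adj (n : ℕ) (G : SimpleGraph (Fin n)) (i j : Fin n)
    (hij : i ≠ j) :
    (Fintype.card {e : Sym2 (Fin n) // ¬ e.IsDiag} = n.choose 2) ∧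
    (hammingDist (cliqueStr n G i) (cliqueStr n G j)
        = Fintype.card {e : Sym2 (Fin n) // ¬ e.IsDiag} ↔ G.Adj i j) := by
  classical
  constructor
  · have h1 : Fintype.card {e : Sym2 (Fin n) // ¬ e.IsDiag}
        = Fintype.card (⊤ : SimpleGraph (Fin n)).edgeSet := by
      apply Fintype.card_congr
      apply Equiv.subtypeEquivRight
      intro e
      show ¬e.IsDiag ↔ e ∈ (⊤ : SimpleGraph (Fin n)).edgeSet
      rw [SimpleGraph.edgeSet_top]
      exact Iff.rfl
    rw [h1, ← SimpleGraph.edgeFinset_card,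
      SimpleGraph.card_edgeFinset_top_eq_card_choose_two, Fintype.card_fin]
  · have key : ∀ e : {e : Sym2 (Fin n) // ¬ e.IsDiag},
        cliqueStr n G i e ≠ cliqueStr n G j e ↔ ¬ (e.val = s(i,j) ∧ e.val ∉ G.edgeSet) := by
      intro e
      unfold cliqueStr
      by_cases h1 : i ∈ e.val ∧ e.val ∉ G.edgeSet <;>
        by_cases h2 : j ∈ e.val ∧ e.val ∉ G.edgeSet <;>
        simp only [if_pos, if_neg, h1, h2, not_true, not_false_iff] <;>
        simp_all [← Sym2.mem_and_mem_iff hij]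
    rw [hammingDist, Fintype.card, Finset.card_filter_eq_iff]
    constructor
    · intro h
      have hk := (key ⟨s(i,j), by simp [Sym2.isDiag_iff_proj_eq, hij]⟩).mp
        (h _ (Finset.mem_univ _))
      by_contra hne
      exact hk ⟨rfl, fun hmem => hne (G.mem_edgeSet.mp hmem)⟩
    · intro hadj e _
      rw [key e]
      rintro ⟨he, hne⟩
      exact hne (he ▸ G.mem_edgeSet.mpr hadj)
end

section
/- With the strings S_i from the clique reduction: a subset W ⊆ [n] of size K ≥ 2 is a clique in G if and only if the set {S_i : i ∈ W} has Min-diversity (minimum pairwise Hamming distance) at least r = C(n,2). -/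
attribute [local instance] Classical.propDecidable

lemma card_le_hammingDist_iff {ι β : Type*} [Fintype ι] [DecidableEq β]
    (f g : ι → β) :
    Fintype.card ι ≤ hammingDist f g ↔ ∀ x, f x ≠ g x := by
  rw [hammingDist]
  constructor
  · intro h x
    have heq : (Finset.univ.filter fun x => f x ≠ g x) = Finset.univ := by
      apply Finset.eq_of_subset_of_card_le (Finset.filter_subset _ _)
      simpa using h
    have := heq ▸ (Finset.mem_univ x)
    exact (Finset.mem_filter.mp this).2
  · intro h
    have heq : (Finset.univ.filter fun x => f x ≠ g x) = Finset.univ := by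
      rw [Finset.filter_eq_self]
      exact fun x _ => h x
    rw [heq, Finset.card_univ]

/-- `W` is a clique iff the Min-diversity of `{S_i : i ∈ W}` is at least
`r = C(n,2)` (the number of positions). -/
theorem clique_iff_min_diversity (n K : ℕ) (G : SimpleGraph (Fin n))
    (W : Finset (Fin n)) (hW : W.card = K) (hK : 2 ≤ K) :
    G.IsClique (↑W : Set (Fin n)) ↔
      ∀ i ∈ W, ∀ j ∈ W, i ≠ j →
        Fintype.card {e : Sym2 (Fin n) // ¬ e.IsDiag} ≤
          hammingDist (cliqueStr n G i) (cliqueStr n G j) := by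
  constructor
  · intro hcl i hi j hj hij
    rw [card_le_hammingDist_iff]
    intro e
    unfold cliqueStr
    split_ifs with h1 h2
    · exfalso
      have hadj : G.Adj i j := hcl hi hj hij
      have he : e.val = s(i, j) := (Sym2.mem_and_mem_iff hij).mp ⟨h1.1, h2.1⟩
      exact h1.2 (he ▸ (G.mem_edgeSet.mpr hadj))
    · simp
    · simp
    · simp [hij]
  · intro h
    intro i hi j hj hij
    have hne := (card_le_hammingDist_iff _ _).mp (h i hi j hj hij)
    by_contra hadj
    have hd : ¬ (s(i, j) : Sym2 (Fin n)).IsDiag := by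
      simpa using hij
    have := hne ⟨s(i, j), hd⟩
    apply this
    unfold cliqueStr
    have hne' : s(i, j) ∉ G.edgeSet := fun hmem => hadj (G.mem_edgeSet.mp hmem)
    rw [if_pos ⟨Sym2.mem_mk_left i j, hne'⟩, if_pos ⟨Sym2.mem_mk_right i j, hne'⟩]
end

section
/- For all distinct strings X, Y ∈ Σ^r obtained as X = A_i·W_i·B_i and Y = A_j·W_j·B_j where the 3s strings A_1,...,A_s, B_1,...,B_s, W_1,...,W_s are over mutually distinct symbol sets except that each W_i contains a substring over Σ: if for every symbol a, a occurs in at most one of the strings {A_i}, {B_i} and in at most one W_i outside Σ, then any common subsequence of S_1 = A_1···A_s·W_1···W_s·B_1···B_s and S_2 = (A_s W_s B_s)···(A_1 W_1 B_1) that contains symbols from two distinct segments A_i and A_j (i ≠ j) of the same group must correspond to a crossing matching; hence every common subsequence uses symbols from at most one segment of each group 𝒜 = {A_i}, 𝒲 = {W_i}, ℬ = {B_i}. -/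
/-!
Let `a` lie only in segment `i` and `b` only in segment `j` of the same group, with `i < j`.
In `S₁` the segments of a group appear in increasing order, so `b` never precedes `a` there;
in `S₂` they appear in decreasing order, so `a` never precedes `b`. A common subsequence
containing both would have to contain them in some order, which one of the two strings forbids
(the matching would cross); hence `a = b`, and so `i = j`.
-/

namespace List

variable {α : Type*}

theorem pair_sublist_or_pair_sublist_of_mem {a b : α} {l : List α} (ha : a ∈ l) (hb : b ∈ l)
    (hab : a ≠ b) : [a, b] <+ l ∨ [b, a] <+ l := by
  obtain ⟨l₁, l₂, rfl⟩ := append_of_mem ha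
  rcases mem_append.mp hb with hb | hb
  · exact .inr ((singleton_sublist.mpr hb).append (singleton_sublist.mpr mem_cons_self))
  · rcases mem_cons.mp hb with rfl | hb
    · exact absurd rfl hab
    · exact .inl <| sublist_append_of_sublist_right <|
        cons_sublist_cons.mpr (singleton_sublist.mpr hb)

theorem not_pair_sublist_append {a b : α} {l₁ l₂ : List α} (hb : b ∉ l₁) (ha : a ∉ l₂) :
    ¬[b, a] <+ l₁ ++ l₂ := by
  intro h
  obtain ⟨r₁, r₂, he, h₁, h₂⟩ := sublist_append_iff.mp h
  match r₁, he with
  | [], he =>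
    rw [nil_append] at he
    subst he
    exact ha (h₂.subset (by simp))
  | _ :: _, he =>
    obtain ⟨rfl, -⟩ := cons_eq_cons.mp he
    exact hb (h₁.subset mem_cons_self)

theorem mem_flatten_take_ofFn {s n : ℕ} {X : Fin s → List α} {a : α} :
    a ∈ ((ofFn X).take n).flatten ↔ ∃ t : Fin s, (t : ℕ) < n ∧ a ∈ X t := by
  simp only [mem_flatten, mem_take_iff_getElem, length_ofFn, List.getElem_ofFn]
  constructor
  · rintro ⟨_, ⟨t, ht, rfl⟩, h⟩
    exact ⟨⟨t, by omega⟩, by simp only at ht ⊢; omega, h⟩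
  · rintro ⟨t, ht, h⟩
    exact ⟨_, ⟨t, by omega, rfl⟩, h⟩

theorem mem_flatten_drop_ofFn {s n : ℕ} {X : Fin s → List α} {a : α} :
    a ∈ ((ofFn X).drop n).flatten ↔ ∃ t : Fin s, n ≤ (t : ℕ) ∧ a ∈ X t := by
  simp only [mem_flatten, mem_drop_iff_getElem, length_ofFn, List.getElem_ofFn]
  constructor
  · rintro ⟨_, ⟨t, ht, rfl⟩, h⟩
    exact ⟨⟨n + t, by omega⟩, by simp, h⟩
  · rintro ⟨t, ht, h⟩
    exact ⟨_, ⟨t - n, by omega, rfl⟩, by simpa [Nat.add_sub_cancel' ht] using h⟩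

theorem not_pair_sublist_append_flatten_ofFn_append {s : ℕ} {X : Fin s → List α} {P Q : List α}
    {a b : α} (n : ℕ) (ha : ∀ t, a ∈ X t → (t : ℕ) < n) (hb : ∀ t, b ∈ X t → n ≤ (t : ℕ))
    (hbP : b ∉ P) (haQ : a ∉ Q) : ¬[b, a] <+ P ++ (ofFn X).flatten ++ Q := by
  have hsplit : P ++ (ofFn X).flatten ++ Q =
      (P ++ ((ofFn X).take n).flatten) ++ (((ofFn X).drop n).flatten ++ Q) := by
    conv_lhs => rw [← take_append_drop n (ofFn X)]
    simp only [flatten_append, append_assoc]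
  rw [hsplit]
  refine not_pair_sublist_append ?_ ?_
  · rw [mem_append, mem_flatten_take_ofFn]
    rintro (h | ⟨t, ht, h⟩)
    exacts [hbP h, (hb t h).not_gt ht]
  · rw [mem_append, mem_flatten_drop_ofFn]
    rintro (⟨t, ht, h⟩ | h)
    exacts [(ha t h).not_ge ht, haQ h]

end List

section

open List

variable {α : Type*}

theorem eq_of_mem_common_sublist_of_not_pair_sublist {a b : α} {C L₁ L₂ : List α}
    (h₁ : C <+ L₁) (h₂ : C <+ L₂) (ha : a ∈ C) (hb : b ∈ C)
    (hL₁ : ¬[b, a] <+ L₁) (hL₂ : ¬[a, b] <+ L₂) : a = b := by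
  by_contra hab
  rcases pair_sublist_or_pair_sublist_of_mem ha hb hab with h | h
  exacts [hL₂ (h.trans h₂), hL₁ (h.trans h₁)]

theorem eq_of_mem_common_sublist_of_mem_segment {s : ℕ} {X G : Fin s → List α}
    {P Q C : List α} {a b : α} {i j : Fin s} (hXG : ∀ t, X t ⊆ G t)
    (h₁ : C <+ P ++ (ofFn X).flatten ++ Q) (h₂ : C <+ (ofFn fun t => G t.rev).flatten)
    (ha : a ∈ C) (hb : b ∈ C) (hai : a ∈ X i) (hbj : b ∈ X j)
    (haG : a ∉ P ++ Q ∧ ∀ t, a ∈ G t → t = i) (hbG : b ∉ P ++ Q ∧ ∀ t, b ∈ G t → t = j) :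
    i = j := by
  wlog hij : i < j generalizing a b i j
  · rcases (not_lt.mp hij).lt_or_eq with h | h
    exacts [(this hb ha hbj hai hbG haG h).symm, h.symm]
  obtain ⟨haPQ, haG⟩ := haG
  obtain ⟨hbPQ, hbG⟩ := hbG
  have hS₁ : ¬[b, a] <+ P ++ (ofFn X).flatten ++ Q :=
    not_pair_sublist_append_flatten_ofFn_append (i + 1)
      (fun t ht => by rw [haG t (hXG t ht)]; omega)
      (fun t ht => by rw [hbG t (hXG t ht)]; omega)
      (fun h => hbPQ (mem_append_left Q h)) (fun h => haPQ (mem_append_right P h))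
  have hS₂ : ¬[a, b] <+ (ofFn fun t => G t.rev).flatten := by
    simpa using not_pair_sublist_append_flatten_ofFn_append (P := []) (Q := [])
      (X := fun t => G t.rev) (s - j)
      (fun t ht => by obtain rfl := Fin.rev_eq_iff.mp (hbG _ ht); simp only [Fin.val_rev]; omega)
      (fun t ht => by obtain rfl := Fin.rev_eq_iff.mp (haG _ ht); simp only [Fin.val_rev]; omega)
      not_mem_nil not_mem_nil
  have hab := eq_of_mem_common_sublist_of_not_pair_sublist h₁ h₂ ha hb hS₁ hS₂
  exact hbG i (hXG i (hab ▸ hai))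

end

/-- every common subsequence of `S₁ = A₁⋯A_s·W₁⋯W_s·B₁⋯B_s` and
`S₂ = (A_s W_s B_s)⋯(A₁ W₁ B₁)` uses symbols from at most one segment of each of the
groups `𝒜`, `𝒲` (outside `Σ`), and `ℬ`. -/
theorem common_subsequence_one_segment_per_group {Γ : Type*} (s : ℕ) (Sigma : Set Γ)
    (A W B : Fin s → List Γ)
    (hA : ∀ c : Γ, ∀ i : Fin s, c ∈ A i →
      (∀ j, c ∈ A j → j = i) ∧ (∀ j, c ∉ B j) ∧ (∀ j, c ∉ W j))
    (hB : ∀ c : Γ, ∀ i : Fin s, c ∈ B i →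
      (∀ j, c ∈ B j → j = i) ∧ (∀ j, c ∉ A j) ∧ (∀ j, c ∉ W j))
    (hW : ∀ c : Γ, c ∉ Sigma → ∀ i j : Fin s, c ∈ W i → c ∈ W j → i = j)
    (C : List Γ)
    (h₁ : C.Sublist ((List.ofFn A).flatten ++ (List.ofFn W).flatten ++ (List.ofFn B).flatten))
    (h₂ : C.Sublist ((List.ofFn fun i : Fin s => A i.rev ++ W i.rev ++ B i.rev).flatten)) :
    (∀ i j : Fin s, ∀ c ∈ C, ∀ c' ∈ C, c ∈ A i → c' ∈ A j → i = j) ∧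
    (∀ i j : Fin s, ∀ c ∈ C, ∀ c' ∈ C, c ∈ B i → c' ∈ B j → i = j) ∧
    (∀ i j : Fin s, ∀ c ∈ C, ∀ c' ∈ C, c ∉ Sigma → c' ∉ Sigma →
      c ∈ W i → c' ∈ W j → i = j) := by
  set G : Fin s → List Γ := fun t => A t ++ W t ++ B t
  have hAconf : ∀ c i, c ∈ A i →
      c ∉ [] ++ ((List.ofFn W).flatten ++ (List.ofFn B).flatten) ∧ ∀ t, c ∈ G t → t = i := by
    intro c i hc
    obtain ⟨hAi, hBn, hWn⟩ := hA c i hc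
    simpa [G, hBn, hWn] using hAi
  have hBconf : ∀ c i, c ∈ B i →
      c ∉ (List.ofFn A).flatten ++ (List.ofFn W).flatten ++ [] ∧ ∀ t, c ∈ G t → t = i := by
    intro c i hc
    obtain ⟨hBi, hAn, hWn⟩ := hB c i hc
    simpa [G, hAn, hWn] using hBi
  have hWconf : ∀ c i, c ∉ Sigma → c ∈ W i →
      c ∉ (List.ofFn A).flatten ++ (List.ofFn B).flatten ∧ ∀ t, c ∈ G t → t = i := by
    intro c i hcS hc
    have hAn : ∀ t, c ∉ A t := fun t h => (hA c t h).2.2 i hc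
    have hBn : ∀ t, c ∉ B t := fun t h => (hB c t h).2.2 i hc
    simpa [G, hAn, hBn] using fun t h => hW c hcS t i h hc
  refine ⟨fun i j c hc c' hc' hci hc'j => ?_, fun i j c hc c' hc' hci hc'j => ?_,
    fun i j c hc c' hc' hcS hc'S hci hc'j => ?_⟩
  · exact eq_of_mem_common_sublist_of_mem_segment (fun t => by simp [G]) (by simpa using h₁) h₂
      hc hc' hci hc'j (hAconf c i hci) (hAconf c' j hc'j)
  · exact eq_of_mem_common_sublist_of_mem_segment (fun t => by simp [G]) (by simpa using h₁) h₂
      hc hc' hci hc'j (hBconf c i hci) (hBconf c' j hc'j)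
  · exact eq_of_mem_common_sublist_of_mem_segment (fun t => by simp [G]) h₁ h₂
      hc hc' hci hc'j (hWconf c i hcS hci) (hWconf c' j hc'S hc'j)
end
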